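/- arXiv:2407.18149 — 3 statements merged into one kernel-verified Lean document; each statement's English description precedes it below -/
import Mathlib

section
/- For every k ∈ ℕ there exist smooth bounded functions c^k_{0,φ}, …, c^k_{k,φ} : (0,∞) → ℝ with c^k_{k,φ} ≡ 1 such that for every smooth function f on Ω one has Z₃^k ∂_z f = Σ_{j=0}^{k} c^k_{j,φ}(z) ∂_z Z₃^j f = ∂_z Z₃^k f + Σ_{j=0}^{k-1} c^k_{j,φ}(z) ∂_z Z₃^j f. -/
open MeasureTheory Set Filter
open scoped ENNReal

noncomputable section

/-- The half-space `Ω = ℝ² × (0,∞)` with coordinates `(x₁, x₂, z)`. -/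
def Omega : Set (ℝ × ℝ × ℝ) := {x | 0 < x.2.2}

/-- The closed half-space `ℝ² × [0,∞)`. -/
def ClosedOmega : Set (ℝ × ℝ × ℝ) := {x | 0 ≤ x.2.2}

/-- `φ(z) = z / (1 + z)`. -/
def phi (z : ℝ) : ℝ := z / (1 + z)

/-- Coordinate directions in `ℝ × ℝ × ℝ`. -/
def dir : Fin 3 → ℝ × ℝ × ℝ := ![((1:ℝ),(0:ℝ),(0:ℝ)), (0,1,0), (0,0,1)]

/-- Partial derivative in the `i`-th coordinate direction. -/
def pd (i : Fin 3) (f : ℝ × ℝ × ℝ → ℝ) (x : ℝ × ℝ × ℝ) : ℝ :=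
  fderiv ℝ f x (dir i)

/-- The conormal vector fields: `Z₁ = ∂₁`, `Z₂ = ∂₂`, `Z₃ = φ(z) ∂_z`. -/
def Z (i : Fin 3) (f : ℝ × ℝ × ℝ → ℝ) (x : ℝ × ℝ × ℝ) : ℝ :=
  if i = 2 then phi x.2.2 * pd 2 f x else pd i f x

/-- `Z^α = Z₁^{α₁} Z₂^{α₂} Z₃^{α₃}` for a multi-index `α = (α₁, α₂, α₃)`. -/
def Zmulti (α : ℕ × ℕ × ℕ) (f : ℝ × ℝ × ℝ → ℝ) : ℝ × ℝ × ℝ → ℝ :=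
  (Z 0)^[α.1] ((Z 1)^[α.2.1] ((Z 2)^[α.2.2] f))

/-- Multi-indices of total order at most `m`. -/
def idxLe (m : ℕ) : Finset (ℕ × ℕ × ℕ) :=
  (Finset.range (m+1) ×ˢ Finset.range (m+1) ×ˢ Finset.range (m+1)).filter
    (fun α => α.1 + α.2.1 + α.2.2 ≤ m)

/-- Lebesgue measure restricted to the half-space. -/
def muOmega : Measure (ℝ × ℝ × ℝ) := volume.restrict Omega

/-- The real-valued `L^q(Ω)` norm. -/
def lpOmega (q : ℝ≥0∞) (f : ℝ × ℝ × ℝ → ℝ) : ℝ := (eLpNorm f q muOmega).toReal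

/-- Membership in the conormal space `H^m_co(Ω)` (scalar functions). -/
def MemHco (m : ℕ) (f : ℝ × ℝ × ℝ → ℝ) : Prop :=
  ∀ α ∈ idxLe m, MemLp (Zmulti α f) 2 muOmega

/-- Membership in the conormal space `W^{m,∞}_co(Ω)` (scalar functions). -/
def MemWcoInf (m : ℕ) (f : ℝ × ℝ × ℝ → ℝ) : Prop :=
  ∀ α ∈ idxLe m, MemLp (Zmulti α f) ⊤ muOmega

/-- Square of the `H^m_co` norm: `‖f‖_m² = Σ_{|α| ≤ m} ‖Z^α f‖_{L²}²`. -/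
def HcoNormSq (m : ℕ) (f : ℝ × ℝ × ℝ → ℝ) : ℝ :=
  ∑ α ∈ idxLe m, (lpOmega 2 (Zmulti α f))^2

/-- The `W^{m,∞}_co` norm: `‖f‖_{m,∞} = Σ_{|α| ≤ m} ‖Z^α f‖_{L^∞}`. -/
def WcoNorm (m : ℕ) (f : ℝ × ℝ × ℝ → ℝ) : ℝ :=
  ∑ α ∈ idxLe m, lpOmega ⊤ (Zmulti α f)

/-- The `W^{k,p}_co` norm: `Σ_{|α| ≤ k} ‖Z^α f‖_{L^p}`. -/
def WkpCoNorm (k : ℕ) (q : ℝ≥0∞) (f : ℝ × ℝ × ℝ → ℝ) : ℝ :=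
  ∑ α ∈ idxLe k, lpOmega q (Zmulti α f)

/-- The `i`-th component of a vector field as a scalar function. -/
def vcomp (u : ℝ × ℝ × ℝ → Fin 3 → ℝ) (i : Fin 3) : ℝ × ℝ × ℝ → ℝ := fun x => u x i

def VMemHco (m : ℕ) (u : ℝ × ℝ × ℝ → Fin 3 → ℝ) : Prop := ∀ i, MemHco m (vcomp u i)

def VMemWcoInf (m : ℕ) (u : ℝ × ℝ × ℝ → Fin 3 → ℝ) : Prop := ∀ i, MemWcoInf m (vcomp u i)

/-- `‖u‖_m²` for a vector field (componentwise). -/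
def VHcoNormSq (m : ℕ) (u : ℝ × ℝ × ℝ → Fin 3 → ℝ) : ℝ :=
  ∑ i : Fin 3, HcoNormSq m (vcomp u i)

/-- `‖u‖_m` for a vector field. -/
def VHcoNorm (m : ℕ) (u : ℝ × ℝ × ℝ → Fin 3 → ℝ) : ℝ := Real.sqrt (VHcoNormSq m u)

/-- `‖u‖_{m,∞}` for a vector field (componentwise). -/
def VWcoNorm (m : ℕ) (u : ℝ × ℝ × ℝ → Fin 3 → ℝ) : ℝ :=
  ∑ i : Fin 3, WcoNorm m (vcomp u i)

/-- `‖∇u‖_{L^∞(Ω)}`, componentwise. -/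
def GradLinf (u : ℝ × ℝ × ℝ → Fin 3 → ℝ) : ℝ :=
  ∑ i : Fin 3, ∑ j : Fin 3, lpOmega ⊤ (pd j (vcomp u i))

/-- `‖u‖_{L^∞(Ω)}`, componentwise. -/
def VLinf (u : ℝ × ℝ × ℝ → Fin 3 → ℝ) : ℝ := ∑ i : Fin 3, lpOmega ⊤ (vcomp u i)

/-- The `W^{1,∞}(Ω)` norm of a vector field. -/
def W1infNorm (u : ℝ × ℝ × ℝ → Fin 3 → ℝ) : ℝ := VLinf u + GradLinf u

/-- `∇u ∈ L^∞(Ω)`. -/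
def MemGradLinf (u : ℝ × ℝ × ℝ → Fin 3 → ℝ) : Prop :=
  ∀ i j : Fin 3, MemLp (pd j (vcomp u i)) ⊤ muOmega

/-- `u ∈ W^{1,∞}(Ω)`. -/
def VMemW1inf (u : ℝ × ℝ × ℝ → Fin 3 → ℝ) : Prop :=
  (∀ i, MemLp (vcomp u i) ⊤ muOmega) ∧ MemGradLinf u

/-- The `L²(Ω)` norm of a vector field. -/
def VL2Norm (u : ℝ × ℝ × ℝ → Fin 3 → ℝ) : ℝ :=
  Real.sqrt (∑ i : Fin 3, (lpOmega 2 (vcomp u i))^2)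

/-- Divergence-free in `Ω`. -/
def DivFree (u : ℝ × ℝ × ℝ → Fin 3 → ℝ) : Prop :=
  ∀ x ∈ Omega, ∑ i : Fin 3, pd i (vcomp u i) x = 0

/-- The slip boundary condition `u₃ = 0` on `{z = 0}`. -/
def SlipBC (u : ℝ × ℝ × ℝ → Fin 3 → ℝ) : Prop :=
  ∀ x₁ x₂ : ℝ, u (x₁, x₂, (0:ℝ)) 2 = 0

/-- `‖∇p‖_m²` (componentwise). -/
def GradHcoNormSq (m : ℕ) (p : ℝ × ℝ × ℝ → ℝ) : ℝ :=
  ∑ i : Fin 3, HcoNormSq m (pd i p)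

/-- `‖∇p‖_m`. -/
def GradHcoNorm (m : ℕ) (p : ℝ × ℝ × ℝ → ℝ) : ℝ := Real.sqrt (GradHcoNormSq m p)

/-- `‖D²p‖_m`, where `D²p` is the full Hessian matrix (componentwise). -/
def D2HcoNorm (m : ℕ) (p : ℝ × ℝ × ℝ → ℝ) : ℝ :=
  Real.sqrt (∑ i : Fin 3, ∑ j : Fin 3, HcoNormSq m (pd i (pd j p)))

/-- `‖∇g‖_{L²(Ω)}`. -/
def GradL2 (g : ℝ × ℝ × ℝ → ℝ) : ℝ :=
  Real.sqrt (∑ i : Fin 3, (lpOmega 2 (pd i g))^2)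

/-- `‖D²g‖_{L²(Ω)}`. -/
def D2L2 (g : ℝ × ℝ × ℝ → ℝ) : ℝ :=
  Real.sqrt (∑ i : Fin 3, ∑ j : Fin 3, (lpOmega 2 (pd i (pd j g)))^2)

/-- The curl (vorticity) of a vector field. -/
def curlOf (u : ℝ × ℝ × ℝ → Fin 3 → ℝ) (x : ℝ × ℝ × ℝ) : Fin 3 → ℝ :=
  ![pd 1 (vcomp u 2) x - pd 2 (vcomp u 1) x,
    pd 2 (vcomp u 0) x - pd 0 (vcomp u 2) x,
    pd 0 (vcomp u 1) x - pd 1 (vcomp u 0) x]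

/-- `(u, p)` solves the incompressible Euler equations on `Ω × (0,T)`
with the slip boundary condition. -/
def IsEulerSolution (T : ℝ) (u : ℝ → ℝ × ℝ × ℝ → Fin 3 → ℝ)
    (p : ℝ → ℝ × ℝ × ℝ → ℝ) : Prop :=
  (∀ t ∈ Ioo (0:ℝ) T, ∀ x ∈ Omega, ∀ i : Fin 3,
      deriv (fun s => u s x i) t
        + (∑ j : Fin 3, u t x j * pd j (vcomp (u t) i) x)
        + pd i (p t) x = 0) ∧
  (∀ t ∈ Ioo (0:ℝ) T, DivFree (u t)) ∧
  (∀ t ∈ Ioo (0:ℝ) T, SlipBC (u t))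

/-- The `H⁵(Ω)` norm (via iterated derivatives). -/
def H5Norm (f : ℝ × ℝ × ℝ → ℝ) : ℝ :=
  ∑ k ∈ Finset.range 6, (eLpNorm (fun x => ‖iteratedFDeriv ℝ k f x‖) 2 muOmega).toReal

/-- Membership in `H⁵(Ω)`. -/
def MemH5 (f : ℝ × ℝ × ℝ → ℝ) : Prop :=
  ∀ k ∈ Finset.range 6, MemLp (fun x => ‖iteratedFDeriv ℝ k f x‖) 2 muOmega

/-- `u ∈ C([0,T]; H⁵(Ω))`. -/
def ContInH5 (T : ℝ) (u : ℝ → ℝ × ℝ × ℝ → Fin 3 → ℝ) : Prop :=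
  (∀ t ∈ Icc (0:ℝ) T, ∀ i : Fin 3, MemH5 (vcomp (u t) i)) ∧
  ∀ t ∈ Icc (0:ℝ) T,
    Tendsto (fun s => ∑ i : Fin 3, H5Norm (fun x => u s x i - u t x i))
      (nhdsWithin t (Icc 0 T)) (nhds 0)

section Aux
open Polynomial

def pr3 : (ℝ×ℝ×ℝ) →L[ℝ] ℝ := (ContinuousLinearMap.snd ℝ ℝ ℝ).comp (ContinuousLinearMap.snd ℝ ℝ (ℝ×ℝ))

lemma isOpen_Omega : IsOpen Omega := isOpen_lt continuous_const pr3.continuous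

lemma pd2_smooth {f : ℝ×ℝ×ℝ → ℝ} (hf : ContDiffOn ℝ (⊤ : ℕ∞) f Omega) :
    ContDiffOn ℝ (⊤ : ℕ∞) (pd 2 f) Omega := by
  have h := hf.fderiv_of_isOpen (m := (⊤ : ℕ∞)) isOpen_Omega (by simp)
  exact h.clm_apply contDiffOn_const

lemma phi3_smooth : ContDiffOn ℝ (⊤ : ℕ∞) (fun x : ℝ×ℝ×ℝ => phi x.2.2) Omega := by
  unfold phi
  apply ContDiffOn.div
  · exact (pr3.contDiff.contDiffOn)
  · exact (contDiff_const.add pr3.contDiff).contDiffOn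
  · intro x hx; have : (0:ℝ) < x.2.2 := hx; positivity

lemma Z2_smooth {f : ℝ×ℝ×ℝ → ℝ} (hf : ContDiffOn ℝ (⊤ : ℕ∞) f Omega) :
    ContDiffOn ℝ (⊤ : ℕ∞) (Z 2 f) Omega := by
  have : Z 2 f = fun x => phi x.2.2 * pd 2 f x := by funext x; simp [Z]
  rw [this]
  exact phi3_smooth.mul (pd2_smooth hf)

lemma iter_smooth {f : ℝ×ℝ×ℝ → ℝ} (hf : ContDiffOn ℝ (⊤ : ℕ∞) f Omega) (j : ℕ) :
    ContDiffOn ℝ (⊤ : ℕ∞) ((Z 2)^[j] f) Omega := by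
  induction j with
  | zero => exact hf
  | succ n ih => rw [Function.iterate_succ_apply']; exact Z2_smooth ih

lemma diffAt_of_smooth {f : ℝ×ℝ×ℝ → ℝ} (hf : ContDiffOn ℝ (⊤ : ℕ∞) f Omega) {x} (hx : x ∈ Omega) :
    DifferentiableAt ℝ f x :=
  ((hf.contDiffAt (isOpen_Omega.mem_nhds hx)).differentiableAt (by simp))

-- product rule
lemma pd2_mul {a : ℝ → ℝ} {g : ℝ×ℝ×ℝ → ℝ} {x : ℝ×ℝ×ℝ} {a' : ℝ}
    (ha : HasDerivAt a a' x.2.2) (hg : DifferentiableAt ℝ g x) :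
    pd 2 (fun y => a y.2.2 * g y) x = a' * g x + a x.2.2 * pd 2 g x := by
  have hA : HasFDerivAt (fun y : ℝ×ℝ×ℝ => a y.2.2) (a' • pr3) x :=
    ha.comp_hasFDerivAt x pr3.hasFDerivAt
  have h := (hA.mul' hg.hasFDerivAt).fderiv
  simp only [pd, h, ContinuousLinearMap.add_apply, ContinuousLinearMap.smul_apply,
    ContinuousLinearMap.coe_smul', Pi.smul_apply, smul_eq_mul]
  have h1 : ((a' • pr3).smulRight (g x)) (dir 2) = a' * g x := by
    simp [ContinuousLinearMap.smulRight_apply, show pr3 (dir 2) = 1 from rfl, mul_comm]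
  have h2 : pr3 (dir 2) = 1 := rfl
  change (fderiv ℝ ((fun y => a y.2.2) * g) x) (dir 2) = _
  rw [h]
  simp [h2]; ring

lemma pd2_congr {f g : ℝ×ℝ×ℝ → ℝ} {x} (hx : x ∈ Omega) (h : ∀ y ∈ Omega, f y = g y) :
    pd 2 f x = pd 2 g x := by
  have : f =ᶠ[nhds x] g := Filter.eventuallyEq_of_mem (isOpen_Omega.mem_nhds hx) h
  simp [pd, this.fderiv_eq]

lemma pd2_sum {n : ℕ} {F : ℕ → ℝ×ℝ×ℝ → ℝ} {x : ℝ×ℝ×ℝ}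
    (hF : ∀ j ∈ Finset.range n, DifferentiableAt ℝ (F j) x) :
    pd 2 (fun y => ∑ j ∈ Finset.range n, F j y) x = ∑ j ∈ Finset.range n, pd 2 (F j) x := by
  simp [pd, fderiv_fun_sum hF]

def Pc : ℕ → ℕ → Polynomial ℝ
  | 0, j => if j = 0 then 1 else 0
  | (k+1), j => (if j = 0 then 0 else Pc k (j-1))
      + (-(1 - X) * X^2) * (Pc k j).derivative - X^2 * Pc k j

def cc (k j : ℕ) (z : ℝ) : ℝ := (Pc k j).eval (1/(1+z))

lemma Pc_zero : ∀ k j, k < j → Pc k j = 0 := by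
  intro k
  induction k with
  | zero => intro j hj; simp [Pc, show ¬ j = 0 by omega]
  | succ k ih =>
    intro j hj
    match j, hj with
    | (j+1), hj =>
      have h1 : Pc k j = 0 := ih j (by omega)
      have h2 : Pc k (j+1) = 0 := ih (j+1) (by omega)
      simp [Pc, h1, h2]

lemma Pc_diag : ∀ k, Pc k k = 1 := by
  intro k
  induction k with
  | zero => simp [Pc]
  | succ k ih =>
    have h0 : Pc k (k+1) = 0 := Pc_zero k (k+1) (by omega)
    simp [Pc, ih, h0]

lemma hasDerivAt_cc (k j : ℕ) {z : ℝ} (hz : (1:ℝ)+z ≠ 0) :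
    HasDerivAt (cc k j) ((Pc k j).derivative.eval (1/(1+z)) * (-(1/(1+z))^2)) z := by
  have hw : HasDerivAt (fun z : ℝ => (1+z)⁻¹) (-1/(1+z)^2) z := by
    have h1 : HasDerivAt (fun z : ℝ => 1+z) 1 z := (hasDerivAt_id z).const_add 1
    simpa [Pi.inv_def] using h1.inv hz
  have h := (Polynomial.hasDerivAt (Pc k j) ((1+z)⁻¹)).comp z hw
  have he : cc k j = ((fun x => (Pc k j).eval x) ∘ fun z : ℝ => (1+z)⁻¹) := by
    funext t; simp [cc, one_div, Function.comp]
  rw [he]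
  refine h.congr_deriv ?_
  simp only [one_div]
  rw [inv_pow]; ring

lemma hasDerivAt_phi {z : ℝ} (hz : (1:ℝ)+z ≠ 0) :
    HasDerivAt phi ((1/(1+z))^2) z := by
  have h1 : HasDerivAt (fun z : ℝ => 1+z) 1 z := (hasDerivAt_id z).const_add 1
  have h := (hasDerivAt_id z).div h1 hz
  refine (h.congr_deriv ?_ : HasDerivAt (id / fun z : ℝ => 1+z) _ z)
  simp only [id]
  field_simp
  ring

lemma comm_lemma {g : ℝ×ℝ×ℝ → ℝ} (hg : ContDiffOn ℝ (⊤ : ℕ∞) g Omega) {x} (hx : x ∈ Omega) :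
    phi x.2.2 * pd 2 (pd 2 g) x
      = pd 2 (Z 2 g) x - (1/(1+x.2.2))^2 * pd 2 g x := by
  have hz0 : (0:ℝ) < x.2.2 := hx
  have hz : (1:ℝ) + x.2.2 ≠ 0 := by positivity
  have h1 : Z 2 g = fun y => phi y.2.2 * pd 2 g y := by funext y; simp [Z]
  rw [h1, pd2_mul (hasDerivAt_phi hz) (diffAt_of_smooth (pd2_smooth hg) hx)]
  ring

lemma main_id (k : ℕ) {f : ℝ×ℝ×ℝ → ℝ} (hf : ContDiffOn ℝ (⊤ : ℕ∞) f Omega) :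
    ∀ x ∈ Omega, (Z 2)^[k] (pd 2 f) x
      = ∑ j ∈ Finset.range (k+1), cc k j x.2.2 * pd 2 ((Z 2)^[j] f) x := by
  induction k with
  | zero => intro x hx; simp [cc, Pc]
  | succ k ih =>
    intro x hx
    have hz0 : (0:ℝ) < x.2.2 := hx
    have hz : (1:ℝ) + x.2.2 ≠ 0 := by positivity
    set z := x.2.2
    set w := 1/(1+z) with hw
    have hphiw : phi z = 1 - w := by unfold phi; rw [hw]; field_simp; ring
    -- notation
    set G : ℕ → ℝ := fun j => pd 2 ((Z 2)^[j] f) x with hG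
    set D : ℕ → ℝ := fun j => (Pc k j).derivative.eval w * (-w^2) with hD
    -- differentiability facts
    have hgj : ∀ j, ContDiffOn ℝ (⊤ : ℕ∞) ((Z 2)^[j] f) Omega := iter_smooth hf
    have hdiff : ∀ j ∈ Finset.range (k+1),
        DifferentiableAt ℝ (fun y => cc k j y.2.2 * pd 2 ((Z 2)^[j] f) y) x := by
      intro j _
      have h1 : DifferentiableAt ℝ (fun y : ℝ×ℝ×ℝ => cc k j y.2.2) x :=
        DifferentiableAt.comp (g := cc k j) x (hasDerivAt_cc k j hz).differentiableAt pr3.differentiableAt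
      exact h1.mul (diffAt_of_smooth (pd2_smooth (hgj j)) hx)
    -- LHS computation
    rw [Function.iterate_succ_apply']
    have hZ : Z 2 ((Z 2)^[k] (pd 2 f)) x = phi z * pd 2 ((Z 2)^[k] (pd 2 f)) x := by
      simp [Z, z]
    rw [hZ, pd2_congr hx (fun y hy => ih y hy), pd2_sum hdiff, Finset.mul_sum]
    have hterm : ∀ j ∈ Finset.range (k+1),
        phi z * pd 2 (fun y => cc k j y.2.2 * pd 2 ((Z 2)^[j] f) y) x
          = (phi z * D j - w^2 * cc k j z) * G j + cc k j z * G (j+1) := by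
      intro j _
      rw [pd2_mul (hasDerivAt_cc k j hz) (diffAt_of_smooth (pd2_smooth (hgj j)) hx)]
      have hc := comm_lemma (hgj j) hx
      have hGj : pd 2 (Z 2 ((Z 2)^[j] f)) x = G (j+1) := by
        show pd 2 (Z 2 ((Z 2)^[j] f)) x = pd 2 ((Z 2)^[j+1] f) x
        rw [Function.iterate_succ_apply']
      rw [mul_add]
      have : phi z * (cc k j z * pd 2 (pd 2 ((Z 2)^[j] f)) x)
          = cc k j z * (pd 2 (Z 2 ((Z 2)^[j] f)) x - (1/(1+z))^2 * pd 2 ((Z 2)^[j] f) x) := by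
        rw [← hc]; ring
      rw [this, hGj]
      have hGj0 : pd 2 ((Z 2)^[j] f) x = G j := rfl
      rw [hGj0, ← hw, hD]
      ring
    rw [Finset.sum_congr rfl hterm, Finset.sum_add_distrib]
    -- RHS computation
    have key : ∀ j, cc (k+1) j z
        = (if j = 0 then 0 else cc k (j-1) z) + (phi z * D j - w^2 * cc k j z) := by
      intro j
      show (Pc (k+1) j).eval w = _
      rw [show Pc (k+1) j = (if j = 0 then 0 else Pc k (j-1))
          + (-(1 - X) * X^2) * (Pc k j).derivative - X^2 * Pc k j from rfl]
      simp only [Polynomial.eval_sub, Polynomial.eval_add, Polynomial.eval_mul,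
        Polynomial.eval_neg, Polynomial.eval_one, Polynomial.eval_pow, Polynomial.eval_X,
        Polynomial.eval_sub]
      rw [hphiw, hD]
      have : ((if j = 0 then (0:Polynomial ℝ) else Pc k (j-1))).eval w
          = (if j = 0 then 0 else cc k (j-1) z) := by
        split <;> simp [cc, hw]
      rw [this]
      show _ = _ + ((1 - w) * ((Pc k j).derivative.eval w * (-w^2)) - w^2 * cc k j z)
      rw [show cc k j z = (Pc k j).eval w from rfl]
      ring
    have hrhs : ∑ j ∈ Finset.range (k+1+1), cc (k+1) j z * G j
        = (∑ j ∈ Finset.range (k+1), cc k j z * G (j+1))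
          + ∑ j ∈ Finset.range (k+1), (phi z * D j - w^2 * cc k j z) * G j := by
      have h1 : ∀ j, cc (k+1) j z * G j
          = (if j = 0 then 0 else cc k (j-1) z) * G j
            + (phi z * D j - w^2 * cc k j z) * G j := by
        intro j; rw [key j]; ring
      rw [Finset.sum_congr rfl (fun j _ => h1 j), Finset.sum_add_distrib]
      congr 1
      · rw [Finset.sum_range_succ']
        simp
      · rw [Finset.sum_range_succ]
        have hPk : Pc k (k+1) = 0 := Pc_zero k (k+1) (by omega)
        have : (phi z * D (k+1) - w^2 * cc k (k+1) z) * G (k+1) = 0 := by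
          simp [hD, show cc k (k+1) z = (Pc k (k+1)).eval w from rfl, hPk]
        rw [this, add_zero]
    rw [hrhs]
    ring

lemma poly_contDiff (p : Polynomial ℝ) : ContDiff ℝ (⊤ : ℕ∞) (fun x => p.eval x) := by
  induction p using Polynomial.induction_on' with
  | add p q hp hq => simpa [Polynomial.eval_add] using hp.add hq
  | monomial n a =>
      simpa [Polynomial.eval_monomial] using contDiff_const.mul (contDiff_id.pow n)

lemma cc_smooth (k j : ℕ) : ContDiffOn ℝ (⊤ : ℕ∞) (cc k j) (Ioi 0) := by
  have h1 : ContDiffOn ℝ (⊤ : ℕ∞) (fun z : ℝ => 1/(1+z)) (Ioi 0) := by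
    apply ContDiffOn.div contDiffOn_const ((contDiff_const.add contDiff_id).contDiffOn)
    intro z hz
    have : (0:ℝ) < z := hz
    positivity
  exact (poly_contDiff (Pc k j)).comp_contDiffOn h1

lemma cc_bounded (k j : ℕ) : ∃ B : ℝ, ∀ z ∈ Ioi (0:ℝ), |cc k j z| ≤ B := by
  obtain ⟨B, hB⟩ := (isCompact_Icc (a := (0:ℝ)) (b := 1)).exists_bound_of_continuousOn
    (Pc k j).continuous.continuousOn
  refine ⟨B, fun z hz => ?_⟩
  have hz0 : (0:ℝ) < z := hz
  have hmem : 1/(1+z) ∈ Icc (0:ℝ) 1 :=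
    ⟨by positivity, by rw [div_le_one (by positivity)]; linarith⟩
  simpa [cc, Real.norm_eq_abs] using hB _ hmem


end Aux

/-- Lemma 2.2 (i): `Z₃^k ∂_z f = Σ_{j≤k} c^k_{j,φ} ∂_z Z₃^j f`,
with smooth bounded coefficients on `(0,∞)` and `c^k_{k,φ} ≡ 1`. -/
theorem conormal_commutator_i (k : ℕ) :
    ∃ c : ℕ → ℝ → ℝ,
      (∀ j ≤ k, ContDiffOn ℝ (⊤ : ℕ∞) (c j) (Ioi 0) ∧ ∃ B : ℝ, ∀ z ∈ Ioi (0:ℝ), |c j z| ≤ B) ∧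
      (∀ z ∈ Ioi (0:ℝ), c k z = 1) ∧
      (∀ f : ℝ × ℝ × ℝ → ℝ, ContDiffOn ℝ (⊤ : ℕ∞) f Omega → ∀ x ∈ Omega,
        (Z 2)^[k] (pd 2 f) x
            = ∑ j ∈ Finset.range (k+1), c j x.2.2 * pd 2 ((Z 2)^[j] f) x ∧
        (Z 2)^[k] (pd 2 f) x
            = pd 2 ((Z 2)^[k] f) x
              + ∑ j ∈ Finset.range k, c j x.2.2 * pd 2 ((Z 2)^[j] f) x) := by
  refine ⟨fun j => cc k j, fun j _ => ⟨cc_smooth k j, cc_bounded k j⟩, ?_, ?_⟩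
  · intro z hz; simp [cc, Pc_diag]
  · intro f hf x hx
    have h1 := main_id k hf x hx
    refine ⟨h1, ?_⟩
    rw [h1, Finset.sum_range_succ, show cc k k x.2.2 = 1 by simp [cc, Pc_diag]]
    ring
end
end

section
/- For every k ∈ ℕ there exist smooth bounded functions a_0, …, a_k and b_0, …, b_k : (0,∞) → ℝ with a_k ≡ 1 such that for every smooth function f on Ω one has Z₃^k ∂_{zz} f = Σ_{l=0}^{k} a_l(z) ∂_{zz} Z₃^l f + Σ_{l=0}^{k} b_l(z) ∂_z Z₃^l f. (Explicitly, a_l = Σ_{j=l}^{k} c^j_{l,φ} c^k_{j,φ} and b_l = Σ_{j=l}^{k} (c^j_{l,φ})' c^k_{j,φ}, where the c^k_{j,φ} are the bounded smooth coefficients satisfying Z₃^k ∂_z f = Σ_{j=0}^{k} c^k_{j,φ} ∂_z Z₃^j f with c^k_{k,φ} ≡ 1.) -/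
open MeasureTheory Set Filter
open scoped ENNReal

noncomputable section

namespace ConormalAux

open Polynomial

noncomputable def dOp (p : ℝ[X]) : ℝ[X] := (X^3 - X^2) * derivative p

noncomputable def ABfam : ℕ → (ℕ → ℝ[X]) × (ℕ → ℝ[X])
  | 0 => ⟨fun l => if l = 0 then 1 else 0, fun _ => 0⟩
  | (k+1) =>
      ⟨fun l => (if l = 0 then 0 else (ABfam k).1 (l-1)) + dOp ((ABfam k).1 l)
           - 2 * X^2 * (ABfam k).1 l,
       fun l => (if l = 0 then 0 else (ABfam k).2 (l-1)) + dOp ((ABfam k).2 l)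
           - X^2 * (ABfam k).2 l + 2 * X^3 * (ABfam k).1 l⟩

lemma AB_zero_of_gt : ∀ k l, k < l → (ABfam k).1 l = 0 ∧ (ABfam k).2 l = 0 := by
  intro k
  induction k with
  | zero =>
      intro l hl
      have : l ≠ 0 := by omega
      simp [ABfam, this]
  | succ k ih =>
      intro l hl
      have h1 : k < l - 1 := by omega
      have h2 : k < l := by omega
      have hl0 : l ≠ 0 := by omega
      obtain ⟨hA1, hB1⟩ := ih (l-1) h1
      obtain ⟨hA2, hB2⟩ := ih l h2
      constructor <;> simp [ABfam, hl0, hA1, hB1, hA2, hB2, dOp]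

lemma A_diag (k : ℕ) : (ABfam k).1 k = 1 := by
  induction k with
  | zero => simp [ABfam]
  | succ k ih =>
      have h0 : (ABfam k).1 (k+1) = 0 := (AB_zero_of_gt k (k+1) (by omega)).1
      simp [ABfam, ih, h0, dOp]

noncomputable def coefFn (p : ℝ[X]) (z : ℝ) : ℝ := p.eval ((1+z)⁻¹)

lemma contDiff_polyEval (p : ℝ[X]) : ContDiff ℝ (⊤ : ℕ∞) (fun x : ℝ => p.eval x) := by
  induction p using Polynomial.induction_on' with
  | add p q hp hq => simpa using hp.add hq
  | monomial n a =>
      simpa [Polynomial.eval_monomial] using (contDiff_const (c := a)).mul (contDiff_id.pow n)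

lemma contDiffOn_coefFn (p : ℝ[X]) : ContDiffOn ℝ (⊤ : ℕ∞) (coefFn p) (Set.Ioi 0) := by
  refine (contDiff_polyEval p).comp_contDiffOn ?_
  refine ContDiffOn.inv (contDiffOn_const.add contDiffOn_id) ?_
  intro z hz
  have : (0:ℝ) < z := hz
  intro h
  nlinarith [h]

lemma abs_coefFn_le (p : ℝ[X]) :
    ∀ z ∈ Set.Ioi (0:ℝ), |coefFn p z| ≤ ∑ i ∈ Finset.range (p.natDegree+1), |p.coeff i| := by
  intro z hz
  have hz0 : (0:ℝ) < z := hz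
  have hu0 : (0:ℝ) < (1+z)⁻¹ := by positivity
  have hu1 : (1+z)⁻¹ ≤ 1 := by
    rw [inv_le_one_iff₀]; right; linarith
  rw [coefFn, Polynomial.eval_eq_sum_range]
  refine (Finset.abs_sum_le_sum_abs _ _).trans (Finset.sum_le_sum fun i _ => ?_)
  rw [abs_mul]
  calc |p.coeff i| * |(1+z)⁻¹ ^ i| ≤ |p.coeff i| * 1 := by
        refine mul_le_mul_of_nonneg_left ?_ (abs_nonneg _)
        rw [abs_pow]
        exact pow_le_one₀ (abs_nonneg _) (by rw [abs_of_pos hu0]; exact hu1)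
    _ = |p.coeff i| := mul_one _

lemma hasDerivAt_coefFn (p : ℝ[X]) {z : ℝ} (hz : (1:ℝ)+z ≠ 0) :
    HasDerivAt (coefFn p) (p.derivative.eval ((1+z)⁻¹) * (-(((1+z)⁻¹)^2))) z := by
  have h1 : HasDerivAt (fun z : ℝ => (1+z)⁻¹) (-(((1+z)⁻¹)^2)) z := by
    have := ((hasDerivAt_const z (1:ℝ)).add (hasDerivAt_id z)).inv hz
    refine this.congr_deriv ?_
    simp only [Pi.add_apply, id, zero_add]; field_simp
  exact (Polynomial.hasDerivAt p ((1+z)⁻¹)).comp z h1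

end ConormalAux

namespace ConormalAux

lemma isOpen_Omega : IsOpen Omega := by
  have : Omega = (fun x : ℝ × ℝ × ℝ => x.2.2) ⁻¹' Set.Ioi 0 := rfl
  rw [this]
  exact isOpen_Ioi.preimage (continuous_snd.comp continuous_snd)

lemma omega_mem_nhds {x : ℝ × ℝ × ℝ} (hx : x ∈ Omega) : Omega ∈ nhds x :=
  isOpen_Omega.mem_nhds hx

lemma pd_congr {F G : ℝ × ℝ × ℝ → ℝ} {x} (h : F =ᶠ[nhds x] G) (i : Fin 3) :
    pd i F x = pd i G x := by
  unfold pd; rw [h.fderiv_eq]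

lemma contDiffOn_pd {f : ℝ × ℝ × ℝ → ℝ} (hf : ContDiffOn ℝ (⊤ : ℕ∞) f Omega) (i : Fin 3) :
    ContDiffOn ℝ (⊤ : ℕ∞) (pd i f) Omega :=
  (hf.fderiv_of_isOpen isOpen_Omega (by simp)).clm_apply contDiffOn_const

lemma diffAt {f : ℝ × ℝ × ℝ → ℝ} {x} (hf : ContDiffOn ℝ (⊤ : ℕ∞) f Omega) (hx : x ∈ Omega) :
    DifferentiableAt ℝ f x :=
  (hf.contDiffAt (omega_mem_nhds hx)).differentiableAt (by simp)

lemma Z2_eq (f : ℝ × ℝ × ℝ → ℝ) : Z 2 f = fun x => phi x.2.2 * pd 2 f x := by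
  funext x; simp [Z]

lemma contDiffOn_phi_comp : ContDiffOn ℝ (⊤ : ℕ∞) (fun x : ℝ × ℝ × ℝ => phi x.2.2) Omega := by
  have hsnd : ContDiff ℝ (⊤ : ℕ∞) (fun x : ℝ × ℝ × ℝ => x.2.2) := contDiff_snd.comp contDiff_snd
  refine ContDiffOn.div hsnd.contDiffOn (contDiffOn_const.add hsnd.contDiffOn) ?_
  intro x hx
  have : (0:ℝ) < x.2.2 := hx
  intro h; nlinarith [h]

lemma contDiffOn_Z2 {f : ℝ × ℝ × ℝ → ℝ} (hf : ContDiffOn ℝ (⊤ : ℕ∞) f Omega) :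
    ContDiffOn ℝ (⊤ : ℕ∞) (Z 2 f) Omega := by
  rw [Z2_eq]
  exact contDiffOn_phi_comp.mul (contDiffOn_pd hf 2)

lemma contDiffOn_Z2_iter {f : ℝ × ℝ × ℝ → ℝ} (hf : ContDiffOn ℝ (⊤ : ℕ∞) f Omega) (l : ℕ) :
    ContDiffOn ℝ (⊤ : ℕ∞) ((Z 2)^[l] f) Omega := by
  induction l with
  | zero => exact hf
  | succ l ih => rw [Function.iterate_succ_apply']; exact contDiffOn_Z2 ih

def piz : (ℝ × ℝ × ℝ) →L[ℝ] ℝ :=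
  (ContinuousLinearMap.snd ℝ ℝ ℝ).comp (ContinuousLinearMap.snd ℝ ℝ (ℝ × ℝ))

lemma hasFDerivAt_z (x : ℝ × ℝ × ℝ) : HasFDerivAt (fun y : ℝ × ℝ × ℝ => y.2.2) piz x :=
  piz.hasFDerivAt

lemma diff_scal {g : ℝ → ℝ} {g' : ℝ} {h : ℝ × ℝ × ℝ → ℝ} {x : ℝ × ℝ × ℝ}
    (hg : HasDerivAt g g' x.2.2) (hh : DifferentiableAt ℝ h x) :
    DifferentiableAt ℝ (fun y : ℝ × ℝ × ℝ => g y.2.2 * h y) x :=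
  ((hg.comp_hasFDerivAt x (hasFDerivAt_z x)).differentiableAt).mul hh

lemma dir_two : dir 2 = ((0:ℝ),(0:ℝ),(1:ℝ)) := rfl

lemma pd2_mul {g : ℝ → ℝ} {g' : ℝ} {h : ℝ × ℝ × ℝ → ℝ} {x : ℝ × ℝ × ℝ}
    (hg : HasDerivAt g g' x.2.2) (hh : DifferentiableAt ℝ h x) :
    pd 2 (fun y => g y.2.2 * h y) x = g' * h x + g x.2.2 * pd 2 h x := by
  have hgc : HasFDerivAt (fun y : ℝ × ℝ × ℝ => g y.2.2) (g' • piz) x :=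
    hg.comp_hasFDerivAt x (hasFDerivAt_z x)
  have hm := hgc.mul hh.hasFDerivAt
  unfold pd
  rw [show (fun y => g y.2.2 * h y) = (fun y : ℝ × ℝ × ℝ => g y.2.2) * h from rfl, hm.fderiv]
  have hπ : piz (dir 2) = 1 := by simp [dir_two, piz]
  simp [hπ]
  ring

lemma pd2_add {F G : ℝ × ℝ × ℝ → ℝ} {x : ℝ × ℝ × ℝ} (hF : DifferentiableAt ℝ F x)
    (hG : DifferentiableAt ℝ G x) (i : Fin 3) :
    pd i (fun y => F y + G y) x = pd i F x + pd i G x := by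
  unfold pd; rw [fderiv_fun_add hF hG]; simp

lemma pd2_sum {s : Finset ℕ} {F : ℕ → ℝ × ℝ × ℝ → ℝ} {x : ℝ × ℝ × ℝ}
    (h : ∀ l ∈ s, DifferentiableAt ℝ (F l) x) (i : Fin 3) :
    pd i (fun y => ∑ l ∈ s, F l y) x = ∑ l ∈ s, pd i (F l) x := by
  unfold pd; rw [fderiv_fun_sum h]; simp

lemma hasDerivAt_phi {z : ℝ} (hz : (1:ℝ)+z ≠ 0) :
    HasDerivAt phi (((1+z)⁻¹)^2) z := by
  have := (hasDerivAt_id z).div ((hasDerivAt_const z (1:ℝ)).add (hasDerivAt_id z)) hz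
  refine this.congr_deriv ?_
  simp only [Pi.add_apply, id]; field_simp; ring

def phi1 (z : ℝ) : ℝ := ((1+z)⁻¹)^2

lemma hasDerivAt_phi1 {z : ℝ} (hz : (1:ℝ)+z ≠ 0) :
    HasDerivAt phi1 (-2*((1+z)⁻¹)^3) z := by
  have h1 : HasDerivAt (fun z : ℝ => (1+z)⁻¹) (-(((1+z)⁻¹)^2)) z := by
    have := ((hasDerivAt_const z (1:ℝ)).add (hasDerivAt_id z)).inv hz
    refine this.congr_deriv ?_
    simp only [Pi.add_apply, id, zero_add]; field_simp
  have := h1.pow 2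
  refine this.congr_deriv ?_
  rw [show (2:ℕ)-1 = 1 from rfl]; push_cast; ring

lemma phi_eq {z : ℝ} (hz : (1:ℝ)+z ≠ 0) : phi z = 1 - (1+z)⁻¹ := by
  unfold phi; field_simp; ring

lemma pd2_Z2 {h : ℝ × ℝ × ℝ → ℝ} {x : ℝ × ℝ × ℝ} (hh : ContDiffOn ℝ (⊤ : ℕ∞) h Omega)
    (hx : x ∈ Omega) :
    pd 2 (Z 2 h) x = phi1 x.2.2 * pd 2 h x + phi x.2.2 * pd 2 (pd 2 h) x := by
  rw [Z2_eq]
  have hz : (0:ℝ) < x.2.2 := hx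
  have hz1 : (1:ℝ) + x.2.2 ≠ 0 := by positivity
  exact pd2_mul (hasDerivAt_phi hz1) (diffAt (contDiffOn_pd hh 2) hx)

lemma pd2_pd2_Z2 {h : ℝ × ℝ × ℝ → ℝ} {x : ℝ × ℝ × ℝ} (hh : ContDiffOn ℝ (⊤ : ℕ∞) h Omega)
    (hx : x ∈ Omega) :
    pd 2 (pd 2 (Z 2 h)) x
      = (-2*((1+x.2.2)⁻¹)^3) * pd 2 h x + 2 * phi1 x.2.2 * pd 2 (pd 2 h) x
        + phi x.2.2 * pd 2 (pd 2 (pd 2 h)) x := by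
  have hz : (0:ℝ) < x.2.2 := hx
  have hz1 : (1:ℝ) + x.2.2 ≠ 0 := by positivity
  have hev : pd 2 (Z 2 h) =ᶠ[nhds x]
      fun y => phi1 y.2.2 * pd 2 h y + phi y.2.2 * pd 2 (pd 2 h) y :=
    eventually_of_mem (omega_mem_nhds hx) fun y hy => pd2_Z2 hh hy
  have hQ := diffAt (contDiffOn_pd hh 2) hx
  have hP := diffAt (contDiffOn_pd (contDiffOn_pd hh 2) 2) hx
  have hz1y : ∀ y : ℝ × ℝ × ℝ, y ∈ Omega → (1:ℝ) + y.2.2 ≠ 0 := by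
    intro y hy; have : (0:ℝ) < y.2.2 := hy; positivity
  rw [pd_congr hev 2,
      pd2_add (diff_scal (hasDerivAt_phi1 hz1) hQ) (diff_scal (hasDerivAt_phi hz1) hP) 2,
      pd2_mul (hasDerivAt_phi1 hz1) hQ, pd2_mul (hasDerivAt_phi hz1) hP]
  unfold phi1
  ring

end ConormalAux

namespace ConormalAux

open Polynomial

lemma main (k : ℕ) (f : ℝ × ℝ × ℝ → ℝ) (hf : ContDiffOn ℝ (⊤ : ℕ∞) f Omega) :
    ∀ x ∈ Omega, (Z 2)^[k] (pd 2 (pd 2 f)) x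
      = (∑ l ∈ Finset.range (k+1), coefFn ((ABfam k).1 l) x.2.2 * pd 2 (pd 2 ((Z 2)^[l] f)) x)
        + ∑ l ∈ Finset.range (k+1), coefFn ((ABfam k).2 l) x.2.2 * pd 2 ((Z 2)^[l] f) x := by
  induction k with
  | zero =>
      intro x hx
      simp [ABfam, coefFn]
  | succ k ih =>
      intro x hx
      have hz : (0:ℝ) < x.2.2 := hx
      have hz1 : (1:ℝ) + x.2.2 ≠ 0 := by positivity
      have hiter : ∀ l : ℕ, ContDiffOn ℝ (⊤ : ℕ∞) ((Z 2)^[l] f) Omega := contDiffOn_Z2_iter hf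
      have hQd : ∀ l, DifferentiableAt ℝ (pd 2 ((Z 2)^[l] f)) x :=
        fun l => diffAt (contDiffOn_pd (hiter l) 2) hx
      have hPd : ∀ l, DifferentiableAt ℝ (pd 2 (pd 2 ((Z 2)^[l] f))) x :=
        fun l => diffAt (contDiffOn_pd (contDiffOn_pd (hiter l) 2) 2) hx
      have step1 : (Z 2)^[k+1] (pd 2 (pd 2 f)) x
          = phi x.2.2 * pd 2 ((Z 2)^[k] (pd 2 (pd 2 f))) x := by
        rw [Function.iterate_succ_apply']
        simp [Z]
      have hev : (Z 2)^[k] (pd 2 (pd 2 f)) =ᶠ[nhds x]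
          fun y => ∑ l ∈ Finset.range (k+1),
            (coefFn ((ABfam k).1 l) y.2.2 * pd 2 (pd 2 ((Z 2)^[l] f)) y
              + coefFn ((ABfam k).2 l) y.2.2 * pd 2 ((Z 2)^[l] f) y) :=
        eventually_of_mem (omega_mem_nhds hx) fun y hy => by
          rw [ih y hy, ← Finset.sum_add_distrib]
      have hdiffterm : ∀ l ∈ Finset.range (k+1), DifferentiableAt ℝ
          (fun y => coefFn ((ABfam k).1 l) y.2.2 * pd 2 (pd 2 ((Z 2)^[l] f)) y
            + coefFn ((ABfam k).2 l) y.2.2 * pd 2 ((Z 2)^[l] f) y) x :=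
        fun l _ => (diff_scal (hasDerivAt_coefFn ((ABfam k).1 l) hz1) (hPd l)).add
          (diff_scal (hasDerivAt_coefFn ((ABfam k).2 l) hz1) (hQd l))
      have hterm : ∀ l ∈ Finset.range (k+1),
          pd 2 (fun y => coefFn ((ABfam k).1 l) y.2.2 * pd 2 (pd 2 ((Z 2)^[l] f)) y
            + coefFn ((ABfam k).2 l) y.2.2 * pd 2 ((Z 2)^[l] f) y) x
          = ((((ABfam k).1 l).derivative.eval ((1+x.2.2)⁻¹) * (-(((1+x.2.2)⁻¹)^2)))
                * pd 2 (pd 2 ((Z 2)^[l] f)) x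
              + coefFn ((ABfam k).1 l) x.2.2 * pd 2 (pd 2 (pd 2 ((Z 2)^[l] f))) x)
            + ((((ABfam k).2 l).derivative.eval ((1+x.2.2)⁻¹) * (-(((1+x.2.2)⁻¹)^2)))
                * pd 2 ((Z 2)^[l] f) x
              + coefFn ((ABfam k).2 l) x.2.2 * pd 2 (pd 2 ((Z 2)^[l] f)) x) := by
        intro l _
        rw [pd2_add (diff_scal (hasDerivAt_coefFn ((ABfam k).1 l) hz1) (hPd l))
              (diff_scal (hasDerivAt_coefFn ((ABfam k).2 l) hz1) (hQd l)) 2,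
            pd2_mul (hasDerivAt_coefFn ((ABfam k).1 l) hz1) (hPd l),
            pd2_mul (hasDerivAt_coefFn ((ABfam k).2 l) hz1) (hQd l)]
      have K1 : ∀ l : ℕ, phi x.2.2 * pd 2 (pd 2 ((Z 2)^[l] f)) x
          = pd 2 ((Z 2)^[l+1] f) x - phi1 x.2.2 * pd 2 ((Z 2)^[l] f) x := by
        intro l
        have h := pd2_Z2 (hiter l) hx
        rw [Function.iterate_succ_apply']
        linarith [h]
      have K2 : ∀ l : ℕ, phi x.2.2 * pd 2 (pd 2 (pd 2 ((Z 2)^[l] f))) x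
          = pd 2 (pd 2 ((Z 2)^[l+1] f)) x + 2*((1+x.2.2)⁻¹)^3 * pd 2 ((Z 2)^[l] f) x
            - 2 * phi1 x.2.2 * pd 2 (pd 2 ((Z 2)^[l] f)) x := by
        intro l
        have h := pd2_pd2_Z2 (hiter l) hx
        rw [Function.iterate_succ_apply']
        linarith [h]
      have hphi : phi x.2.2 = 1 - (1+x.2.2)⁻¹ := phi_eq hz1
      have hphi1 : phi1 x.2.2 = ((1+x.2.2)⁻¹)^2 := rfl
      have hL : (Z 2)^[k+1] (pd 2 (pd 2 f)) x
          = ∑ l ∈ Finset.range (k+1),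
              ( (((1+x.2.2)⁻¹)^3-((1+x.2.2)⁻¹)^2) * ((ABfam k).1 l).derivative.eval ((1+x.2.2)⁻¹)
                  * pd 2 (pd 2 ((Z 2)^[l] f)) x
                + coefFn ((ABfam k).1 l) x.2.2 * pd 2 (pd 2 ((Z 2)^[l+1] f)) x
                + 2*((1+x.2.2)⁻¹)^3 * coefFn ((ABfam k).1 l) x.2.2 * pd 2 ((Z 2)^[l] f) x
                - 2*((1+x.2.2)⁻¹)^2 * coefFn ((ABfam k).1 l) x.2.2 * pd 2 (pd 2 ((Z 2)^[l] f)) x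
                + (((1+x.2.2)⁻¹)^3-((1+x.2.2)⁻¹)^2) * ((ABfam k).2 l).derivative.eval ((1+x.2.2)⁻¹)
                  * pd 2 ((Z 2)^[l] f) x
                + coefFn ((ABfam k).2 l) x.2.2 * pd 2 ((Z 2)^[l+1] f) x
                - ((1+x.2.2)⁻¹)^2 * coefFn ((ABfam k).2 l) x.2.2 * pd 2 ((Z 2)^[l] f) x ) := by
        rw [step1, pd_congr hev 2, pd2_sum hdiffterm 2, Finset.mul_sum]
        refine Finset.sum_congr rfl fun l hl => ?_
        rw [hterm l hl]
        have k1 := K1 l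
        have k2 := K2 l
        rw [hphi1] at k1 k2
        rw [hphi] at k1 k2 ⊢
        linear_combination (coefFn ((ABfam k).1 l) x.2.2) * k2
          + (coefFn ((ABfam k).2 l) x.2.2) * k1
      have evalA : ∀ l : ℕ, coefFn ((ABfam (k+1)).1 l) x.2.2
          = (if l = 0 then 0 else coefFn ((ABfam k).1 (l-1)) x.2.2)
            + (((1+x.2.2)⁻¹)^3-((1+x.2.2)⁻¹)^2) * ((ABfam k).1 l).derivative.eval ((1+x.2.2)⁻¹)
            - 2*((1+x.2.2)⁻¹)^2 * coefFn ((ABfam k).1 l) x.2.2 := by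
        intro l
        rcases eq_or_ne l 0 with h|h <;>
          simp [ABfam, h, coefFn, dOp] <;> ring
      have evalB : ∀ l : ℕ, coefFn ((ABfam (k+1)).2 l) x.2.2
          = (if l = 0 then 0 else coefFn ((ABfam k).2 (l-1)) x.2.2)
            + (((1+x.2.2)⁻¹)^3-((1+x.2.2)⁻¹)^2) * ((ABfam k).2 l).derivative.eval ((1+x.2.2)⁻¹)
            - ((1+x.2.2)⁻¹)^2 * coefFn ((ABfam k).2 l) x.2.2
            + 2*((1+x.2.2)⁻¹)^3 * coefFn ((ABfam k).1 l) x.2.2 := by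
        intro l
        rcases eq_or_ne l 0 with h|h <;>
          simp [ABfam, h, coefFn, dOp] <;> ring
      have hsplitA : ∑ l ∈ Finset.range (k+1+1),
            coefFn ((ABfam (k+1)).1 l) x.2.2 * pd 2 (pd 2 ((Z 2)^[l] f)) x
          = (∑ l ∈ Finset.range (k+1),
              coefFn ((ABfam k).1 l) x.2.2 * pd 2 (pd 2 ((Z 2)^[l+1] f)) x)
            + ∑ l ∈ Finset.range (k+1),
              ((((1+x.2.2)⁻¹)^3-((1+x.2.2)⁻¹)^2) * ((ABfam k).1 l).derivative.eval ((1+x.2.2)⁻¹)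
                - 2*((1+x.2.2)⁻¹)^2 * coefFn ((ABfam k).1 l) x.2.2)
                * pd 2 (pd 2 ((Z 2)^[l] f)) x := by
        have h1 : ∀ l ∈ Finset.range (k+1+1),
            coefFn ((ABfam (k+1)).1 l) x.2.2 * pd 2 (pd 2 ((Z 2)^[l] f)) x
            = (if l = 0 then 0
                else coefFn ((ABfam k).1 (l-1)) x.2.2 * pd 2 (pd 2 ((Z 2)^[l] f)) x)
              + ((((1+x.2.2)⁻¹)^3-((1+x.2.2)⁻¹)^2) * ((ABfam k).1 l).derivative.eval ((1+x.2.2)⁻¹)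
                - 2*((1+x.2.2)⁻¹)^2 * coefFn ((ABfam k).1 l) x.2.2)
                * pd 2 (pd 2 ((Z 2)^[l] f)) x := by
          intro l _
          rw [evalA l]
          rcases eq_or_ne l 0 with h|h <;> simp [h] <;> ring
        rw [Finset.sum_congr rfl h1, Finset.sum_add_distrib]
        congr 1
        · rw [Finset.sum_range_succ']
          simp
        · rw [Finset.sum_range_succ]
          have h0 : ((ABfam k).1 (k+1)) = 0 := (AB_zero_of_gt k (k+1) (by omega)).1
          simp [h0, coefFn]
      have hsplitB : ∑ l ∈ Finset.range (k+1+1),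
            coefFn ((ABfam (k+1)).2 l) x.2.2 * pd 2 ((Z 2)^[l] f) x
          = (∑ l ∈ Finset.range (k+1),
              coefFn ((ABfam k).2 l) x.2.2 * pd 2 ((Z 2)^[l+1] f) x)
            + ∑ l ∈ Finset.range (k+1),
              ((((1+x.2.2)⁻¹)^3-((1+x.2.2)⁻¹)^2) * ((ABfam k).2 l).derivative.eval ((1+x.2.2)⁻¹)
                - ((1+x.2.2)⁻¹)^2 * coefFn ((ABfam k).2 l) x.2.2
                + 2*((1+x.2.2)⁻¹)^3 * coefFn ((ABfam k).1 l) x.2.2)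
                * pd 2 ((Z 2)^[l] f) x := by
        have h1 : ∀ l ∈ Finset.range (k+1+1),
            coefFn ((ABfam (k+1)).2 l) x.2.2 * pd 2 ((Z 2)^[l] f) x
            = (if l = 0 then 0
                else coefFn ((ABfam k).2 (l-1)) x.2.2 * pd 2 ((Z 2)^[l] f) x)
              + ((((1+x.2.2)⁻¹)^3-((1+x.2.2)⁻¹)^2) * ((ABfam k).2 l).derivative.eval ((1+x.2.2)⁻¹)
                - ((1+x.2.2)⁻¹)^2 * coefFn ((ABfam k).2 l) x.2.2
                + 2*((1+x.2.2)⁻¹)^3 * coefFn ((ABfam k).1 l) x.2.2)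
                * pd 2 ((Z 2)^[l] f) x := by
          intro l _
          rw [evalB l]
          rcases eq_or_ne l 0 with h|h <;> simp [h] <;> ring
        rw [Finset.sum_congr rfl h1, Finset.sum_add_distrib]
        congr 1
        · rw [Finset.sum_range_succ']
          simp
        · rw [Finset.sum_range_succ]
          have h0A : ((ABfam k).1 (k+1)) = 0 := (AB_zero_of_gt k (k+1) (by omega)).1
          have h0B : ((ABfam k).2 (k+1)) = 0 := (AB_zero_of_gt k (k+1) (by omega)).2
          simp [h0A, h0B, coefFn]
      rw [hL, hsplitA, hsplitB]
      simp only [← Finset.sum_add_distrib]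
      exact Finset.sum_congr rfl fun l _ => by ring

end ConormalAux

/-- Lemma 2.2 (iii): `Z₃^k ∂_{zz} f = Σ_{l≤k} a_l ∂_{zz} Z₃^l f
+ Σ_{l≤k} b_l ∂_z Z₃^l f`, with smooth bounded coefficients on `(0,∞)` and `a_k ≡ 1`. -/
theorem conormal_commutator_iii (k : ℕ) :
    ∃ a b : ℕ → ℝ → ℝ,
      (∀ l ≤ k,
        (ContDiffOn ℝ (⊤ : ℕ∞) (a l) (Ioi 0) ∧ ∃ B : ℝ, ∀ z ∈ Ioi (0:ℝ), |a l z| ≤ B) ∧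
        (ContDiffOn ℝ (⊤ : ℕ∞) (b l) (Ioi 0) ∧ ∃ B : ℝ, ∀ z ∈ Ioi (0:ℝ), |b l z| ≤ B)) ∧
      (∀ z ∈ Ioi (0:ℝ), a k z = 1) ∧
      (∀ f : ℝ × ℝ × ℝ → ℝ, ContDiffOn ℝ (⊤ : ℕ∞) f Omega → ∀ x ∈ Omega,
        (Z 2)^[k] (pd 2 (pd 2 f)) x
          = (∑ l ∈ Finset.range (k+1), a l x.2.2 * pd 2 (pd 2 ((Z 2)^[l] f)) x)
            + ∑ l ∈ Finset.range (k+1), b l x.2.2 * pd 2 ((Z 2)^[l] f) x) := by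
  refine ⟨fun l => ConormalAux.coefFn ((ConormalAux.ABfam k).1 l),
    fun l => ConormalAux.coefFn ((ConormalAux.ABfam k).2 l), ?_, ?_, ?_⟩
  · intro l _
    exact ⟨⟨ConormalAux.contDiffOn_coefFn _, _, ConormalAux.abs_coefFn_le _⟩,
      ⟨ConormalAux.contDiffOn_coefFn _, _, ConormalAux.abs_coefFn_le _⟩⟩
  · intro z _
    show ConormalAux.coefFn ((ConormalAux.ABfam k).1 k) z = 1
    rw [ConormalAux.A_diag k]
    simp [ConormalAux.coefFn]
  · intro f hf x hx
    exact ConormalAux.main k f hf x hx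
end
end

section
/- Let u = (u₁,u₂,u₃) be a smooth vector field on Ω with ∇·u = 0 in Ω, and let ω = curl u. Then there is a universal constant C > 0 such that ‖∇u‖_{L^∞} ≤ C ( ‖ω‖_{L^∞} + ‖u‖_{1,∞} ), i.e. all first-order derivatives of u are controlled in L^∞ by the vorticity and the first-order conormal derivatives of u. -/
open MeasureTheory Set Filter
open scoped ENNReal

noncomputable section

private lemma ennreal_combine {a00 a01 a02 a10 a11 a12 a20 a21 a22
    w0 w1 w2 u0 u1 u2 v0 v1 v2 : ℝ≥0∞}
    (h1 : a02 ≤ w1 + a20) (h2 : a12 ≤ w0 + a21) (h3 : a22 ≤ a00 + a11) :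
    a00 + a01 + a02 + (a10 + a11 + a12) + (a20 + a21 + a22) ≤
      2 * (w0 + w1 + w2 +
        (u0 + u1 + u2 + (a00 + a10 + a20 + (a01 + a11 + a21 + (v0 + v1 + v2))))) := by
  calc a00 + a01 + a02 + (a10 + a11 + a12) + (a20 + a21 + a22)
      ≤ a00 + a01 + (w1 + a20) + (a10 + a11 + (w0 + a21))
        + (a20 + a21 + (a00 + a11)) := by gcongr
    _ = (a00 + a10 + a20 + (a01 + a11 + a21))
        + (w0 + w1 + (a00 + a11 + a20 + a21)) := by ring
    _ ≤ (w0 + w1 + w2 +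
          (u0 + u1 + u2 + (a00 + a10 + a20 + (a01 + a11 + a21 + (v0 + v1 + v2)))))
        + (w0 + w1 + w2 +
          (u0 + u1 + u2 + (a00 + a10 + a20 + (a01 + a11 + a21 + (v0 + v1 + v2))))) := by
        refine add_le_add ?_ ?_
        · calc a00 + a10 + a20 + (a01 + a11 + a21)
              ≤ (a00 + a10 + a20 + (a01 + a11 + a21))
                + ((w0 + w1 + w2) + (u0 + u1 + u2) + (v0 + v1 + v2)) := le_self_add
            _ = _ := by ring
        · calc w0 + w1 + (a00 + a11 + a20 + a21)
              ≤ (w0 + w1 + (a00 + a11 + a20 + a21))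
                + (w2 + (u0 + u1 + u2) + (a10 + a01) + (v0 + v1 + v2)) := le_self_add
            _ = _ := by ring
    _ = 2 * _ := (two_mul _).symm

/-- inequality (3.27): `‖∇u‖_{L^∞} ≲ ‖ω‖_{L^∞} + ‖u‖_{1,∞}`. -/
theorem gradient_controlled_by_vorticity :
    ∃ C : NNReal, 0 < C ∧
      ∀ u : ℝ × ℝ × ℝ → Fin 3 → ℝ,
        (∀ i, ContDiffOn ℝ (⊤ : ℕ∞) (vcomp u i) Omega) → DivFree u →
        ∑ i : Fin 3, ∑ j : Fin 3, eLpNorm (pd j (vcomp u i)) ⊤ muOmega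
          ≤ (C : ENNReal) *
              ((∑ i : Fin 3, eLpNorm (fun x => curlOf u x i) ⊤ muOmega)
                + ∑ α ∈ idxLe 1, ∑ i : Fin 3, eLpNorm (Zmulti α (vcomp u i)) ⊤ muOmega) := by
  refine ⟨2, by norm_num, fun u _hsm hdiv => ?_⟩
  have hmeas : ∀ (f : ℝ × ℝ × ℝ → ℝ) (j : Fin 3),
      AEStronglyMeasurable (pd j f) muOmega :=
    fun f j => (measurable_fderiv_apply_const ℝ f (dir j)).aestronglyMeasurable
  have hΩ : MeasurableSet Omega :=
    measurableSet_lt measurable_const (measurable_snd.comp measurable_snd)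
  have h1 : eLpNorm (pd 2 (vcomp u 0)) ⊤ muOmega ≤
      eLpNorm (fun x => curlOf u x 1) ⊤ muOmega + eLpNorm (pd 0 (vcomp u 2)) ⊤ muOmega := by
    have e : pd 2 (vcomp u 0) =
        fun x => (fun y => curlOf u y 1) x + pd 0 (vcomp u 2) x := by
      funext x; simp [curlOf]
    rw [e]
    refine eLpNorm_add_le ?_ (hmeas _ _) le_top
    exact ((measurable_fderiv_apply_const ℝ (vcomp u 0) (dir 2)).sub
      (measurable_fderiv_apply_const ℝ (vcomp u 2) (dir 0))).aestronglyMeasurable.congr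
      (Filter.EventuallyEq.of_eq (by funext x; simp [curlOf, pd]))
  have h2 : eLpNorm (pd 2 (vcomp u 1)) ⊤ muOmega ≤
      eLpNorm (fun x => curlOf u x 0) ⊤ muOmega + eLpNorm (pd 1 (vcomp u 2)) ⊤ muOmega := by
    have e : pd 2 (vcomp u 1) =
        fun x => (fun y => -curlOf u y 0) x + pd 1 (vcomp u 2) x := by
      funext x; simp [curlOf]
    rw [e]
    have := eLpNorm_add_le (f := fun y => -curlOf u y 0) (g := pd 1 (vcomp u 2))
      (μ := muOmega) (p := ⊤)
      (((measurable_fderiv_apply_const ℝ (vcomp u 1) (dir 2)).sub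
        (measurable_fderiv_apply_const ℝ (vcomp u 2) (dir 1))).aestronglyMeasurable.congr
        (Filter.EventuallyEq.of_eq (by funext x; simp [curlOf, pd])))
      (hmeas _ _) le_top
    calc eLpNorm (fun x => (fun y => -curlOf u y 0) x + pd 1 (vcomp u 2) x) ⊤ muOmega
        ≤ eLpNorm (fun y => -curlOf u y 0) ⊤ muOmega + eLpNorm (pd 1 (vcomp u 2)) ⊤ muOmega :=
          this
      _ = _ := by
          congr 1
          rw [show (fun y => -curlOf u y 0) = -(fun y => curlOf u y 0) from rfl, eLpNorm_neg]
  have h3 : eLpNorm (pd 2 (vcomp u 2)) ⊤ muOmega ≤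
      eLpNorm (pd 0 (vcomp u 0)) ⊤ muOmega + eLpNorm (pd 1 (vcomp u 1)) ⊤ muOmega := by
    have hae : pd 2 (vcomp u 2) =ᵐ[muOmega]
        fun x => -(pd 0 (vcomp u 0) x + pd 1 (vcomp u 1) x) := by
      filter_upwards [(ae_restrict_iff' hΩ).mpr (Filter.Eventually.of_forall hdiv)] with x hx
      rw [Fin.sum_univ_three] at hx
      linarith
    calc eLpNorm (pd 2 (vcomp u 2)) ⊤ muOmega
        = eLpNorm (fun x => -(pd 0 (vcomp u 0) x + pd 1 (vcomp u 1) x)) ⊤ muOmega :=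
          eLpNorm_congr_ae hae
      _ = eLpNorm (fun x => pd 0 (vcomp u 0) x + pd 1 (vcomp u 1) x) ⊤ muOmega :=
          by rw [show (fun x => -(pd 0 (vcomp u 0) x + pd 1 (vcomp u 1) x)) =
                -(fun x => pd 0 (vcomp u 0) x + pd 1 (vcomp u 1) x) from rfl, eLpNorm_neg]
      _ ≤ _ := eLpNorm_add_le (hmeas _ _) (hmeas _ _) le_top
  have hidx : idxLe 1 = ({(0,0,0), (1,0,0), (0,1,0), (0,0,1)} : Finset (ℕ × ℕ × ℕ)) := by
    decide
  have hZ100 : ∀ f, Zmulti (1,0,0) f = pd 0 f := by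
    intro f; funext x; simp [Zmulti, Z]
  have hZ010 : ∀ f, Zmulti (0,1,0) f = pd 1 f := by
    intro f; funext x
    simp only [Zmulti, Function.iterate_one, Function.iterate_zero, id_eq, Z]
    norm_num [Fin.ext_iff]
  have hZ000 : ∀ f, Zmulti (0,0,0) f = f := fun f => rfl
  rw [hidx]
  rw [Finset.sum_insert (by decide), Finset.sum_insert (by decide),
    Finset.sum_insert (by decide), Finset.sum_singleton]
  simp only [hZ100, hZ010, hZ000, Fin.sum_univ_three]
  exact ennreal_combine h1 h2 h3
end
end
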